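/- arXiv:1310.5395 — 7 statements merged into one kernel-verified Lean document; each statement's English description precedes it below -/
import Mathlib

section
/- Let (𝔤, ω, J, g) be a left-invariant pseudo-Kähler structure on a Lie algebra, where g(X,Y) = ω(X,JY). If X lies in the center Z of 𝔤 and the subspace [𝔤,𝔤] + J([𝔤,𝔤]) is ω-orthogonal to the J-invariant central ideal containing X, then the Levi-Civita covariant derivative satisfies ∇_X Y = ∇_Y X = 0 for all Y ∈ 𝔤. -/
/-!
Since `X` is central, the Koszul formula for `∇_X Y` and `∇_Y X` reduces to a single term,
`g(X, [Z,Y])` resp. `g([Z,Y], X)`. Both vanish by the orthogonality hypothesis: the first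
because `J[Z,Y]` is ω-orthogonal to `X`, the second because `[Z,Y]` is ω-orthogonal to `JX`,
which lies in `𝔞₁(J)` together with `X` as `J² = -1`. Nondegeneracy of `g` concludes.
-/

section

variable {L : Type*} [LieRing L] [LieAlgebra ℝ L]

theorem nabla_eq_zero_of_central_of_orthogonal_derived {G : L →ₗ[ℝ] L →ₗ[ℝ] ℝ}
    (hGnd : ∀ X : L, (∀ Y : L, G X Y = 0) → X = 0) {nabla : L → L → L}
    (hkoszul : ∀ X Y Z : L,
      2 * G (nabla X Y) Z = G ⁅X, Y⁆ Z + G ⁅Z, X⁆ Y + G X ⁅Z, Y⁆)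
    {X : L} (hX : ∀ U : L, ⁅X, U⁆ = 0)
    (hleft : ∀ Z Y : L, G X ⁅Z, Y⁆ = 0) (hright : ∀ Z Y : L, G ⁅Z, Y⁆ X = 0) (Y : L) :
    nabla X Y = 0 ∧ nabla Y X = 0 := by
  have hX' : ∀ U : L, ⁅U, X⁆ = 0 := fun U => by rw [← lie_skew, hX, neg_zero]
  constructor
  · refine hGnd _ fun Z => ?_
    have h := hkoszul X Y Z
    simp only [hX, hX', hleft, map_zero, LinearMap.zero_apply, add_zero] at h
    linarith
  · refine hGnd _ fun Z => ?_
    have h := hkoszul Y X Z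
    simp only [hX', hright, map_zero, LinearMap.zero_apply, add_zero] at h
    linarith

end

theorem nabla_vanishes_on_a1_general
    {L : Type*} [LieRing L] [LieAlgebra ℝ L]
    (ω : L →ₗ[ℝ] L →ₗ[ℝ] ℝ)
    (halt : ∀ X : L, ω X X = 0)
    (J : L →ₗ[ℝ] L)
    (hJ2 : ∀ X : L, J (J X) = -X)
    (g : L → L → ℝ)
    (hg : ∀ X Y : L, g X Y = ω X (J Y))
    (hgnd : ∀ X : L, (∀ Y : L, g X Y = 0) → X = 0)
    -- [𝔤,𝔤] + J([𝔤,𝔤]) is ω-orthogonal to 𝔞₁(J) = {Z : [Z,𝔤]=0 and [JZ,𝔤]=0}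
    (horth : ∀ W ∈ Submodule.span ℝ
        ({w : L | ∃ X Y : L, w = ⁅X, Y⁆} ∪ {w : L | ∃ X Y : L, w = J ⁅X, Y⁆}),
      ∀ Z : L, (∀ U : L, ⁅Z, U⁆ = 0) → (∀ U : L, ⁅J Z, U⁆ = 0) → ω W Z = 0)
    (nabla : L → L → L)
    (hkoszul : ∀ X Y Z : L,
      2 * g (nabla X Y) Z = g ⁅X, Y⁆ Z + g ⁅Z, X⁆ Y + g X ⁅Z, Y⁆)
    (X : L) (hX : ∀ U : L, ⁅X, U⁆ = 0) (hJX : ∀ U : L, ⁅J X, U⁆ = 0) :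
    ∀ Y : L, nabla X Y = 0 ∧ nabla Y X = 0 := by
  obtain rfl : g = fun X Y => ω.compl₂ J X Y := funext₂ hg
  have hJJX : ∀ U : L, ⁅J (J X), U⁆ = 0 := fun U => by rw [hJ2, neg_lie, hX, neg_zero]
  refine nabla_eq_zero_of_central_of_orthogonal_derived hgnd hkoszul hX
    (fun Z Y => ?_) (fun Z Y => ?_)
  · exact (LinearMap.IsAlt.eq_iff halt).1 <|
      horth _ (Submodule.subset_span (Or.inr ⟨Z, Y, rfl⟩)) X hX hJX
  · exact horth _ (Submodule.subset_span (Or.inl ⟨Z, Y, rfl⟩)) (J X) hJX hJJX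

/-- On a pseudo-Kähler Lie algebra (𝔤, ω, J, g) with g(X,Y) = ω(X,JY),
if X lies in the center and [𝔤,𝔤] + J([𝔤,𝔤]) is ω-orthogonal to the J-invariant central
ideal 𝔞₁(J) containing X, then ∇_X Y = ∇_Y X = 0 for all Y. -/
theorem nabla_vanishes_on_a1
    {L : Type*} [LieRing L] [LieAlgebra ℝ L] [FiniteDimensional ℝ L]
    (ω : L →ₗ[ℝ] L →ₗ[ℝ] ℝ)
    (halt : ∀ X : L, ω X X = 0)
    (hclosed : ∀ X Y Z : L, ω ⁅X, Y⁆ Z - ω ⁅X, Z⁆ Y + ω ⁅Y, Z⁆ X = 0)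
    (hωnd : ∀ X : L, (∀ Y : L, ω X Y = 0) → X = 0)
    (J : L →ₗ[ℝ] L)
    (hJ2 : ∀ X : L, J (J X) = -X)
    (hNij : ∀ X Y : L, ⁅J X, J Y⁆ - ⁅X, Y⁆ - J ⁅J X, Y⁆ - J ⁅X, J Y⁆ = 0)
    (hcompat : ∀ X Y : L, ω (J X) (J Y) = ω X Y)
    (g : L → L → ℝ)
    (hg : ∀ X Y : L, g X Y = ω X (J Y))
    (hgnd : ∀ X : L, (∀ Y : L, g X Y = 0) → X = 0)
    -- [𝔤,𝔤] + J([𝔤,𝔤]) is ω-orthogonal to 𝔞₁(J) = {Z : [Z,𝔤]=0 and [JZ,𝔤]=0}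
    (horth : ∀ W ∈ Submodule.span ℝ
        ({w : L | ∃ X Y : L, w = ⁅X, Y⁆} ∪ {w : L | ∃ X Y : L, w = J ⁅X, Y⁆}),
      ∀ Z : L, (∀ U : L, ⁅Z, U⁆ = 0) → (∀ U : L, ⁅J Z, U⁆ = 0) → ω W Z = 0)
    (nabla : L → L → L)
    (hkoszul : ∀ X Y Z : L,
      2 * g (nabla X Y) Z = g ⁅X, Y⁆ Z + g ⁅Z, X⁆ Y + g X ⁅Z, Y⁆)
    (X : L) (hX : ∀ U : L, ⁅X, U⁆ = 0) (hJX : ∀ U : L, ⁅J X, U⁆ = 0) :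
    ∀ Y : L, nabla X Y = 0 ∧ nabla Y X = 0 :=
  nabla_vanishes_on_a1_general ω halt J hJ2 g hg hgnd horth nabla hkoszul X hX hJX
end

section
/- Let 𝔤 be a 6-dimensional real Lie algebra with basis e₁,…,e₆ and nonzero brackets [e₁,e₂] = e₄, [e₁,e₄] = e₆, [e₂,e₃] = e₆ (the Lie algebra 𝔤₂₁). Then the 2-form ω = e¹∧e⁶ + e²∧e⁵ − e³∧e⁴ (in the dual basis) is closed and nondegenerate, i.e., a symplectic form on 𝔤. -/
noncomputable section

/-- The underlying space ℝ⁶ of the Lie algebra 𝔤₂₁. -/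
abbrev V21 : Type := Fin 6 → ℝ

/-- Standard basis vectors e₁,…,e₆ (0-indexed). -/
def e21 (i : Fin 6) : V21 := Pi.single i 1

/-- Bracket of 𝔤₂₁: [e₁,e₂] = e₄, [e₁,e₄] = e₆, [e₂,e₃] = e₆. -/
def br21 (X Y : V21) : V21 :=
  ![0, 0, 0, X 0 * Y 1 - X 1 * Y 0, 0,
    (X 0 * Y 3 - X 3 * Y 0) + (X 1 * Y 2 - X 2 * Y 1)]

/-- ω = e¹∧e⁶ + e²∧e⁵ − e³∧e⁴. -/
def om21 (X Y : V21) : ℝ :=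
  (X 0 * Y 5 - X 5 * Y 0) + (X 1 * Y 4 - X 4 * Y 1) - (X 2 * Y 3 - X 3 * Y 2)

theorem br21_jacobi (X Y Z : V21) :
    br21 (br21 X Y) Z + br21 (br21 Y Z) X + br21 (br21 Z X) Y = 0 := by
  funext i
  fin_cases i <;> simp [br21]; ring

theorem om21_closed (X Y Z : V21) :
    om21 (br21 X Y) Z - om21 (br21 X Z) Y + om21 (br21 Y Z) X = 0 := by
  simp only [om21, br21, Matrix.cons_val]
  ring

/-- ω pairs eᵢ with e₇₋ᵢ, so contracting with `e21 i.rev` reads off `±X i`. -/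
theorem om21_e21_rev_eq_zero_iff (X : V21) (i : Fin 6) :
    om21 X (e21 i.rev) = 0 ↔ X i = 0 := by
  fin_cases i <;> simp [om21, e21]

theorem om21_nondegenerate (X : V21) (h : ∀ Y : V21, om21 X Y = 0) : X = 0 :=
  funext fun i => (om21_e21_rev_eq_zero_iff X i).1 (h _)

/-- the bracket of 𝔤₂₁ satisfies the Jacobi identity, and
ω = e¹∧e⁶ + e²∧e⁵ − e³∧e⁴ is a closed and nondegenerate 2-form on 𝔤₂₁. -/
theorem g21_omega_symplectic :
    (∀ X Y Z : V21,
      br21 (br21 X Y) Z + br21 (br21 Y Z) X + br21 (br21 Z X) Y = 0) ∧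
    (∀ X Y Z : V21,
      om21 (br21 X Y) Z - om21 (br21 X Z) Y + om21 (br21 Y Z) X = 0) ∧
    (∀ X : V21, (∀ Y : V21, om21 X Y = 0) → X = 0) :=
  ⟨br21_jacobi, om21_closed, om21_nondegenerate⟩
end
end

section
/- On the Lie algebra 𝔤₂₁ with brackets [e₁,e₂]=e₄, [e₁,e₄]=e₆, [e₂,e₃]=e₆ and symplectic form ω = e¹∧e⁶ + e²∧e⁵ − e³∧e⁴, the almost complex structure J defined by J(e₂) = -a e₁, J(e₁) = (1/a) e₂, J(e₄) = a e₃, J(e₃) = -(1/a) e₄, J(e₆) = a e₅, J(e₅) = -(1/a) e₆ (for a ≠ 0) satisfies J² = -Id, is integrable (Nijenhuis tensor N_J = 0), and is compatible with ω (ω(JX,JY) = ω(X,Y)). -/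
noncomputable section

/-- J with J(e₂) = -a·e₁, J(e₁) = (1/a)·e₂, J(e₄) = a·e₃, J(e₃) = -(1/a)·e₄,
J(e₆) = a·e₅, J(e₅) = -(1/a)·e₆. -/
def J21 (a : ℝ) (X : V21) : V21 :=
  ![-a * X 1, (1 / a) * X 0, a * X 3, -(1 / a) * X 2, a * X 5, -(1 / a) * X 4]

def nijenhuis {V : Type*} [AddCommGroup V] (br : V → V → V) (J : V → V) (X Y : V) : V :=
  br (J X) (J Y) - br X Y - J (br (J X) Y) - J (br X (J Y))

section

variable {a : ℝ}

theorem J21_J21 (ha : a ≠ 0) (X : V21) : J21 a (J21 a X) = -X := by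
  ext i
  fin_cases i <;>
    simp only [J21, Pi.neg_apply, Matrix.cons_val, Fin.zero_eta, Fin.mk_one, Fin.reduceFinMk] <;>
    field_simp

theorem om21_J21_J21 (ha : a ≠ 0) (X Y : V21) : om21 (J21 a X) (J21 a Y) = om21 X Y := by
  simp only [om21, J21, Matrix.cons_val]
  field_simp
  ring

theorem nijenhuis_br21_J21 (ha : a ≠ 0) (X Y : V21) : nijenhuis br21 (J21 a) X Y = 0 := by
  ext i
  fin_cases i <;>
    simp only [nijenhuis, br21, J21, Pi.sub_apply, Pi.zero_apply, Matrix.cons_val, Fin.zero_eta,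
      Fin.mk_one, Fin.reduceFinMk] <;>
    field_simp <;> ring

end

/-- for a ≠ 0, J satisfies J² = -Id, is integrable (Nijenhuis tensor zero),
and is compatible with ω on 𝔤₂₁. -/
theorem g21_J_complex_compatible (a : ℝ) (ha : a ≠ 0) :
    (∀ X : V21, J21 a (J21 a X) = -X) ∧
    (∀ X Y : V21,
      br21 (J21 a X) (J21 a Y) - br21 X Y
        - J21 a (br21 (J21 a X) Y) - J21 a (br21 X (J21 a Y)) = 0) ∧
    (∀ X Y : V21, om21 (J21 a X) (J21 a Y) = om21 X Y) :=
  ⟨J21_J21 ha, nijenhuis_br21_J21 ha, om21_J21_J21 ha⟩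
end
end

section
/- The associated pseudo-Kähler metric g on 𝔤₂₁ (with ω = e¹∧e⁶ + e²∧e⁵ − e³∧e⁴ and J(e₂)=-ae₁, J(e₄)=ae₃, J(e₆)=ae₅, a ≠ 0) is Ricci-flat: the Ricci tensor Ric(X,Y) = trace(Z ↦ R(Z,X)Y) vanishes identically. -/
noncomputable section

/-- Associated metric g(X,Y) = ω(X, JY). -/
def g21 (a : ℝ) (X Y : V21) : ℝ := om21 X (J21 a Y)

/-!
The Koszul formula determines `∇` because `g` is nondegenerate; solving it gives (indices 1-based)
`∇_X Y = -a²X₂Y₂ e₃ - X₂Y₁ e₄ - a²(X₂Y₄ + X₄Y₂) e₅ + (X₂Y₃ - X₄Y₁) e₆`.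
Thus `∇` has no `e₁, e₂` components, `∇_X` depends only on `X₂, X₄`, and `[e_i, X] ∈ span(e₆)`
for `i ≥ 3`. So the `e_i`-component of `R(e_i, X)Y` vanishes: for `i = 1, 2` trivially, for
`i = 3, 5, 6` because `∇_{e_i} = 0 = ∇_{[e_i, X]}`, and for `i = 4` because the `e₄`-component of
`∇_Z W` is `-Z₂W₁`.
-/

def nabla21 (a : ℝ) (X Y : V21) : V21 :=
  ![0, 0, -a ^ 2 * (X 1 * Y 1), -(X 1 * Y 0), -a ^ 2 * (X 1 * Y 3 + X 3 * Y 1),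
    X 1 * Y 2 - X 3 * Y 0]

lemma g21_sub_left (a : ℝ) (U W Z : V21) : g21 a (U - W) Z = g21 a U Z - g21 a W Z := by
  simp only [g21, om21, Pi.sub_apply]
  ring

lemma g21_e21 (a : ℝ) (U : V21) :
    (fun k => g21 a U (e21 k)) = ![-U 4 / a, a * U 5, U 2 / a, a * U 3, -U 0 / a, a * U 1] := by
  funext k
  fin_cases k <;> simp [g21, om21, J21, e21] <;> ring

lemma g21_eq_zero_of_forall {a : ℝ} (ha : a ≠ 0) {U : V21} (h : ∀ Z, g21 a U Z = 0) :
    U = 0 := by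
  have hU : ![-U 4 / a, a * U 5, U 2 / a, a * U 3, -U 0 / a, a * U 1] = 0 := by
    rw [← g21_e21]
    exact funext fun k => h _
  simp only [Matrix.cons_eq_zero_iff, div_eq_zero_iff, neg_eq_zero, mul_eq_zero, ha, or_false,
    false_or, Matrix.zero_empty, and_true] at hU
  funext k
  fin_cases k <;> simp [hU]

lemma g21_left_cancel {a : ℝ} (ha : a ≠ 0) {U W : V21} (h : ∀ Z, g21 a U Z = g21 a W Z) :
    U = W :=
  sub_eq_zero.1 <| g21_eq_zero_of_forall ha fun Z => by rw [g21_sub_left, h, sub_self]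

lemma nabla21_koszul {a : ℝ} (ha : a ≠ 0) (X Y Z : V21) :
    2 * g21 a (nabla21 a X Y) Z
      = g21 a (br21 X Y) Z + g21 a (br21 Z X) Y + g21 a X (br21 Z Y) := by
  simp only [g21, om21, J21, br21, nabla21, Matrix.cons_val, Matrix.cons_val_zero,
    Matrix.cons_val_one]
  field_simp
  ring

lemma eq_nabla21_of_koszul {a : ℝ} (ha : a ≠ 0) (nabla : V21 → V21 → V21)
    (hkoszul : ∀ X Y Z : V21,
      2 * g21 a (nabla X Y) Z
        = g21 a (br21 X Y) Z + g21 a (br21 Z X) Y + g21 a X (br21 Z Y)) :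
    nabla = nabla21 a := by
  funext X Y
  refine g21_left_cancel ha fun Z => ?_
  have := (hkoszul X Y Z).trans (nabla21_koszul ha X Y Z).symm
  linarith

lemma trace_curvature_nabla21 (a : ℝ) (X Y : V21) :
    ∑ i : Fin 6, (nabla21 a (e21 i) (nabla21 a X Y) - nabla21 a X (nabla21 a (e21 i) Y)
      - nabla21 a (br21 (e21 i) X) Y) i = 0 := by
  simp [Fin.sum_univ_six, nabla21, br21, e21, Pi.single_apply]

/-- the associated pseudo-Kähler metric on 𝔤₂₁ is Ricci-flat:
Ric(X,Y) = trace(Z ↦ R(Z,X)Y) = 0 (trace computed in the standard basis). -/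
theorem g21_ricci_flat (a : ℝ) (ha : a ≠ 0)
    (nabla : V21 → V21 → V21)
    (hkoszul : ∀ X Y Z : V21,
      2 * g21 a (nabla X Y) Z
        = g21 a (br21 X Y) Z + g21 a (br21 Z X) Y + g21 a X (br21 Z Y))
    (R : V21 → V21 → V21 → V21)
    (hR : ∀ X Y Z : V21,
      R X Y Z = nabla X (nabla Y Z) - nabla Y (nabla X Z) - nabla (br21 X Y) Z) :
    ∀ X Y : V21, (∑ i : Fin 6, R (e21 i) X Y i) = 0 := by
  intro X Y
  obtain rfl := eq_nabla21_of_koszul ha nabla hkoszul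
  simp only [hR]
  exact trace_curvature_nabla21 a X Y
end
end

section
/- Let 𝔤 be a 6-dimensional Lie algebra of type (2,4,6) decomposed as 𝔤 = A ⊕ B ⊕ Z where Z is the 2-dimensional center, B ⊕ Z is abelian, [A,A] ⊆ B⊕Z, [A,B] ⊆ Z. Let ω be a symplectic form such that A and Z are ω-isotropic and ω-dual, and ω is nondegenerate on B. Let J be a compatible nilpotent complex structure preserving B⊕Z and Z, and g = ω∘J the associated metric. Then ∇_X Y = 0 for all X, Y ∈ B ⊕ Z. -/
/-!
Every bracket with an element of `B ⊕ Z` lands in the centre `Z`, and `Z` is `ω`-orthogonal to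
`B ⊕ Z`; since `J` preserves both `Z` and `B ⊕ Z`, all three terms of the Koszul formula for
`g(∇_X Y, W)` vanish when `X, Y ∈ B ⊕ Z`. As `g = ω(·, J ·)` is nondegenerate, `∇_X Y = 0`.
-/

section LieBrackets

variable {R L : Type*} [CommRing R] [LieRing L] [LieAlgebra R L] {A B Z : Submodule R L}

theorem lie_mem_of_mem_right (hspan : A ⊔ B ⊔ Z = ⊤) (hZ : ∀ z ∈ Z, ∀ Y : L, ⁅z, Y⁆ = 0)
    (hBB : ∀ x ∈ B, ∀ y ∈ B, ⁅x, y⁆ = 0) (hAB : ∀ x ∈ A, ∀ y ∈ B, ⁅x, y⁆ ∈ Z)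
    (W : L) {b : L} (hb : b ∈ B) : ⁅W, b⁆ ∈ Z := by
  rw [← lie_skew, Z.neg_mem_iff]
  have hle : A ⊔ B ⊔ Z ≤ Z.comap (LieModule.toEnd R L L b) := by
    refine sup_le (sup_le (fun a ha => ?_) (fun b' hb' => ?_)) (fun z hz => ?_) <;>
      simp only [Submodule.mem_comap, LieModule.toEnd_apply_apply]
    · rw [← lie_skew, Z.neg_mem_iff]
      exact hAB a ha b hb
    · rw [hBB b hb b' hb']
      exact Z.zero_mem
    · rw [← lie_skew, hZ z hz, neg_zero]
      exact Z.zero_mem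
  exact hle (hspan ▸ Submodule.mem_top)

theorem lie_mem_of_mem_sup (hspan : A ⊔ B ⊔ Z = ⊤) (hZ : ∀ z ∈ Z, ∀ Y : L, ⁅z, Y⁆ = 0)
    (hBB : ∀ x ∈ B, ∀ y ∈ B, ⁅x, y⁆ = 0) (hAB : ∀ x ∈ A, ∀ y ∈ B, ⁅x, y⁆ ∈ Z)
    (W : L) {x : L} (hx : x ∈ B ⊔ Z) : ⁅W, x⁆ ∈ Z := by
  have hle : B ⊔ Z ≤ Z.comap (LieModule.toEnd R L L W) := by
    refine sup_le (fun b hb => ?_) (fun z hz => ?_) <;>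
      simp only [Submodule.mem_comap, LieModule.toEnd_apply_apply]
    · exact lie_mem_of_mem_right hspan hZ hBB hAB W hb
    · rw [← lie_skew, hZ z hz, neg_zero]
      exact Z.zero_mem
  exact hle hx

end LieBrackets

theorem LinearMap.apply_eq_zero_of_mem_sup {R M : Type*} [CommSemiring R] [AddCommMonoid M]
    [Module R M] {ω : M →ₗ[R] M →ₗ[R] R} {B Z : Submodule R M}
    (hBZ : ∀ b ∈ B, ∀ z ∈ Z, ω b z = 0) (hZZ : ∀ x ∈ Z, ∀ y ∈ Z, ω x y = 0)
    {x z : M} (hx : x ∈ B ⊔ Z) (hz : z ∈ Z) : ω x z = 0 :=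
  (sup_le (fun b hb => LinearMap.mem_ker.2 (hBZ b hb z hz))
    (fun z' hz' => LinearMap.mem_ker.2 (hZZ z' hz' z hz)) : B ⊔ Z ≤ LinearMap.ker (ω.flip z)) hx

theorem type246_nabla_BZ_zero_general
    {L : Type*} [LieRing L] [LieAlgebra ℝ L]
    (A B Zc : Submodule ℝ L)
    (hspan : A ⊔ B ⊔ Zc = ⊤)
    -- Zc is the center of 𝔤
    (hZc : ∀ z ∈ Zc, ∀ Y : L, ⁅z, Y⁆ = 0)
    -- B ⊕ Z is abelian
    (habel : ∀ x ∈ B ⊔ Zc, ∀ y ∈ B ⊔ Zc, ⁅x, y⁆ = 0)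
    -- [A,A] ⊆ B ⊕ Z, [A,B] ⊆ Z
    (hAB : ∀ x ∈ A, ∀ y ∈ B, ⁅x, y⁆ ∈ Zc)
    -- ω is symplectic
    (ω : L →ₗ[ℝ] L →ₗ[ℝ] ℝ)
    (halt : ∀ X : L, ω X X = 0)
    (hnd : ∀ X : L, (∀ Y : L, ω X Y = 0) → X = 0)
    -- A and Z are ω-isotropic and ω-dual, ω nondegenerate on B, B ⊥ (A ⊕ Z)
    (hZiso : ∀ x ∈ Zc, ∀ y ∈ Zc, ω x y = 0)
    (hBorth : ∀ x ∈ B, ∀ y ∈ A ⊔ Zc, ω x y = 0)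
    -- J is a compatible complex structure preserving Z and B ⊕ Z
    (J : L →ₗ[ℝ] L)
    (hJ2 : ∀ X : L, J (J X) = -X)
    (hJZ : ∀ z ∈ Zc, J z ∈ Zc)
    (hJBZ : ∀ x ∈ B ⊔ Zc, J x ∈ B ⊔ Zc)
    -- associated metric and Levi-Civita connection
    (g : L → L → ℝ) (hg : ∀ X Y : L, g X Y = ω X (J Y))
    (nabla : L → L → L)
    (hkoszul : ∀ X Y Z : L,
      2 * g (nabla X Y) Z = g ⁅X, Y⁆ Z + g ⁅Z, X⁆ Y + g X ⁅Z, Y⁆) :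
    ∀ X ∈ B ⊔ Zc, ∀ Y ∈ B ⊔ Zc, nabla X Y = 0 := by
  intro X hX Y hY
  have hBB : ∀ x ∈ B, ∀ y ∈ B, ⁅x, y⁆ = 0 := fun x hx y hy =>
    habel x (Submodule.mem_sup_left hx) y (Submodule.mem_sup_left hy)
  have hbracket : ∀ W, ∀ x ∈ B ⊔ Zc, ⁅W, x⁆ ∈ Zc := fun W x hx =>
    lie_mem_of_mem_sup hspan hZc hBB hAB W hx
  have hortho : ∀ x ∈ B ⊔ Zc, ∀ z ∈ Zc, ω x z = 0 := fun x hx z hz =>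
    LinearMap.apply_eq_zero_of_mem_sup
      (fun b hb z hz => hBorth b hb z (Submodule.mem_sup_right hz)) hZiso hx hz
  refine hnd _ fun V => ?_
  obtain ⟨W, rfl⟩ : ∃ W, J W = V := ⟨-J V, by rw [map_neg, hJ2, neg_neg]⟩
  have hXY : g ⁅X, Y⁆ W = 0 := by
    rw [hg, habel X hX Y hY, map_zero, LinearMap.zero_apply]
  have hWX : g ⁅W, X⁆ Y = 0 := by
    rw [hg, LinearMap.IsAlt.eq_iff halt]
    exact hortho _ (hJBZ Y hY) _ (hbracket W X hX)
  have hWY : g X ⁅W, Y⁆ = 0 := by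
    rw [hg]
    exact hortho X hX _ (hJZ _ (hbracket W Y hY))
  have hK := hkoszul X Y W
  rw [hXY, hWX, hWY, hg] at hK
  linarith

/-- type-(2,4,6) theorem, part: ∇_X Y = 0 for X, Y ∈ B ⊕ Z. -/
theorem type246_nabla_BZ_zero
    {L : Type*} [LieRing L] [LieAlgebra ℝ L] [FiniteDimensional ℝ L]
    (A B Zc : Submodule ℝ L)
    (hdimL : Module.finrank ℝ L = 6)
    (hdimA : Module.finrank ℝ A = 2)
    (hdimB : Module.finrank ℝ B = 2)
    (hdimZ : Module.finrank ℝ Zc = 2)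
    (hspan : A ⊔ B ⊔ Zc = ⊤)
    -- Zc is the center of 𝔤
    (hZc : ∀ z ∈ Zc, ∀ Y : L, ⁅z, Y⁆ = 0)
    (hZc' : ∀ z : L, (∀ Y : L, ⁅z, Y⁆ = 0) → z ∈ Zc)
    -- B ⊕ Z is abelian
    (habel : ∀ x ∈ B ⊔ Zc, ∀ y ∈ B ⊔ Zc, ⁅x, y⁆ = 0)
    -- [A,A] ⊆ B ⊕ Z, [A,B] ⊆ Z
    (hAA : ∀ x ∈ A, ∀ y ∈ A, ⁅x, y⁆ ∈ B ⊔ Zc)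
    (hAB : ∀ x ∈ A, ∀ y ∈ B, ⁅x, y⁆ ∈ Zc)
    -- ω is symplectic
    (ω : L →ₗ[ℝ] L →ₗ[ℝ] ℝ)
    (halt : ∀ X : L, ω X X = 0)
    (hclosed : ∀ X Y Z : L, ω ⁅X, Y⁆ Z - ω ⁅X, Z⁆ Y + ω ⁅Y, Z⁆ X = 0)
    (hnd : ∀ X : L, (∀ Y : L, ω X Y = 0) → X = 0)
    -- A and Z are ω-isotropic and ω-dual, ω nondegenerate on B, B ⊥ (A ⊕ Z)
    (hAiso : ∀ x ∈ A, ∀ y ∈ A, ω x y = 0)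
    (hZiso : ∀ x ∈ Zc, ∀ y ∈ Zc, ω x y = 0)
    (hdualAZ : ∀ x ∈ A, x ≠ 0 → ∃ z ∈ Zc, ω x z ≠ 0)
    (hdualZA : ∀ z ∈ Zc, z ≠ 0 → ∃ x ∈ A, ω x z ≠ 0)
    (hBnd : ∀ x ∈ B, x ≠ 0 → ∃ y ∈ B, ω x y ≠ 0)
    (hBorth : ∀ x ∈ B, ∀ y ∈ A ⊔ Zc, ω x y = 0)
    -- J is a compatible complex structure preserving Z and B ⊕ Z
    (J : L →ₗ[ℝ] L)
    (hJ2 : ∀ X : L, J (J X) = -X)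
    (hNij : ∀ X Y : L, ⁅J X, J Y⁆ - ⁅X, Y⁆ - J ⁅J X, Y⁆ - J ⁅X, J Y⁆ = 0)
    (hcompat : ∀ X Y : L, ω (J X) (J Y) = ω X Y)
    (hJZ : ∀ z ∈ Zc, J z ∈ Zc)
    (hJBZ : ∀ x ∈ B ⊔ Zc, J x ∈ B ⊔ Zc)
    -- associated metric and Levi-Civita connection
    (g : L → L → ℝ) (hg : ∀ X Y : L, g X Y = ω X (J Y))
    (nabla : L → L → L)
    (hkoszul : ∀ X Y Z : L,
      2 * g (nabla X Y) Z = g ⁅X, Y⁆ Z + g ⁅Z, X⁆ Y + g X ⁅Z, Y⁆) :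
    ∀ X ∈ B ⊔ Zc, ∀ Y ∈ B ⊔ Zc, nabla X Y = 0 :=
  type246_nabla_BZ_zero_general A B Zc hspan hZc habel hAB ω halt hnd hZiso hBorth J hJ2 hJZ hJBZ g
    hg nabla hkoszul
end

section
/- Under the hypotheses of the type-(2,4,6) theorem (𝔤 = A ⊕ B ⊕ Z with ω-isotropic ω-dual A, Z and abelian B⊕Z), for all X ∈ A and Y ∈ Z, ∇_X Y = ∇_Y X = 0. -/
/-!
Closedness of `ω` gives `ω(⁅W, X⁆, z) = 0` for every central `z`, because the other two terms of
`dω(W, X, z)` contain `⁅W, z⁆` and `⁅X, z⁆`. Since `J` preserves the centre, `J Y` is central,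
so the Koszul formula reduces `2 g(∇_X Y, W)` to `ω(⁅W, X⁆, J Y)` and `2 g(∇_Y X, W)` to
`g(Y, ⁅W, X⁆) = g(⁅W, X⁆, Y) = ω(⁅W, X⁆, J Y)`; nondegeneracy of `g` concludes.
-/

section

variable {R L : Type*} [CommRing R] [LieRing L] [LieAlgebra R L] {ω : L →ₗ[R] L →ₗ[R] R}

theorem apply_lie_central_eq_zero_of_closed
    (hclosed : ∀ X Y Z : L, ω ⁅X, Y⁆ Z - ω ⁅X, Z⁆ Y + ω ⁅Y, Z⁆ X = 0)
    {z : L} (hz : ∀ Y : L, ⁅z, Y⁆ = 0) (X Y : L) : ω ⁅X, Y⁆ z = 0 := by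
  have h := hclosed X Y z
  rwa [← lie_skew X z, ← lie_skew Y z, hz, hz, neg_zero, map_zero,
    LinearMap.zero_apply, LinearMap.zero_apply, sub_zero, add_zero] at h

theorem eq_zero_of_forall_apply_comp_eq_zero {J : L →ₗ[R] L} (hJ2 : ∀ X : L, J (J X) = -X)
    (hnd : ∀ X : L, (∀ Y : L, ω X Y = 0) → X = 0) {V : L} (hV : ∀ W : L, ω V (J W) = 0) :
    V = 0 := by
  refine hnd V fun U => ?_
  simpa [hJ2] using hV (-J U)

theorem apply_comp_comm_of_compatible (halt : ω.IsAlt) {J : L →ₗ[R] L}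
    (hJ2 : ∀ X : L, J (J X) = -X) (hcompat : ∀ X Y : L, ω (J X) (J Y) = ω X Y) (X Y : L) :
    ω X (J Y) = ω Y (J X) := by
  rw [← hcompat X, hJ2, map_neg, halt.neg]

end

section Koszul

variable {R L : Type*} [CommRing R] [NoZeroDivisors R] [NeZero (2 : R)] [LieRing L]
  [LieAlgebra R L] {ω : L →ₗ[R] L →ₗ[R] R} {J : L →ₗ[R] L} {g : L → L → R} {nabla : L → L → L}

variable (hclosed : ∀ X Y Z : L, ω ⁅X, Y⁆ Z - ω ⁅X, Z⁆ Y + ω ⁅Y, Z⁆ X = 0)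
  (hnd : ∀ X : L, (∀ Y : L, ω X Y = 0) → X = 0) (hJ2 : ∀ X : L, J (J X) = -X)
  (hg : ∀ X Y : L, g X Y = ω X (J Y))
  (hkoszul : ∀ X Y Z : L, 2 * g (nabla X Y) Z = g ⁅X, Y⁆ Z + g ⁅Z, X⁆ Y + g X ⁅Z, Y⁆)
  {Y : L} (hY : ∀ V : L, ⁅Y, V⁆ = 0) (hJY : ∀ V : L, ⁅J Y, V⁆ = 0)
include hclosed hnd hJ2 hg hkoszul hY hJY

theorem nabla_central_eq_zero (X : L) : nabla X Y = 0 := by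
  refine eq_zero_of_forall_apply_comp_eq_zero hJ2 hnd fun W => ?_
  have h := hkoszul X Y W
  rw [← lie_skew X Y, ← lie_skew W Y, hY, hY, neg_zero, hg, hg, hg, hg,
    apply_lie_central_eq_zero_of_closed hclosed hJY] at h
  simpa [two_ne_zero] using h

theorem nabla_of_central_eq_zero (halt : ω.IsAlt)
    (hcompat : ∀ X Y : L, ω (J X) (J Y) = ω X Y) (X : L) : nabla Y X = 0 := by
  refine eq_zero_of_forall_apply_comp_eq_zero hJ2 hnd fun W => ?_
  have h := hkoszul Y X W
  rw [hY, ← lie_skew W Y, hY, neg_zero, hg, hg, hg, hg,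
    apply_comp_comm_of_compatible halt hJ2 hcompat Y,
    apply_lie_central_eq_zero_of_closed hclosed hJY] at h
  simpa [two_ne_zero] using h

end Koszul

theorem type246_nabla_A_Z_zero_general
    {L : Type*} [LieRing L] [LieAlgebra ℝ L]
    (A Zc : Submodule ℝ L)
    -- Zc is the center of 𝔤
    (hZc : ∀ z ∈ Zc, ∀ Y : L, ⁅z, Y⁆ = 0)
    -- ω is symplectic
    (ω : L →ₗ[ℝ] L →ₗ[ℝ] ℝ)
    (halt : ∀ X : L, ω X X = 0)
    (hclosed : ∀ X Y Z : L, ω ⁅X, Y⁆ Z - ω ⁅X, Z⁆ Y + ω ⁅Y, Z⁆ X = 0)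
    (hnd : ∀ X : L, (∀ Y : L, ω X Y = 0) → X = 0)
    -- J is a compatible complex structure preserving Z and B ⊕ Z
    (J : L →ₗ[ℝ] L)
    (hJ2 : ∀ X : L, J (J X) = -X)
    (hcompat : ∀ X Y : L, ω (J X) (J Y) = ω X Y)
    (hJZ : ∀ z ∈ Zc, J z ∈ Zc)
    -- associated metric and Levi-Civita connection
    (g : L → L → ℝ) (hg : ∀ X Y : L, g X Y = ω X (J Y))
    (nabla : L → L → L)
    (hkoszul : ∀ X Y Z : L,
      2 * g (nabla X Y) Z = g ⁅X, Y⁆ Z + g ⁅Z, X⁆ Y + g X ⁅Z, Y⁆) :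
    ∀ X ∈ A, ∀ Y ∈ Zc, nabla X Y = 0 ∧ nabla Y X = 0 := by
  intro X _ Y hY
  have hYc := hZc Y hY
  have hJYc := hZc (J Y) (hJZ Y hY)
  exact ⟨nabla_central_eq_zero hclosed hnd hJ2 hg hkoszul hYc hJYc X,
    nabla_of_central_eq_zero hclosed hnd hJ2 hg hkoszul hYc hJYc halt hcompat X⟩

/-- type-(2,4,6) theorem, part: ∇_X Y = ∇_Y X = 0 for X ∈ A, Y ∈ Z. -/
theorem type246_nabla_A_Z_zero
    {L : Type*} [LieRing L] [LieAlgebra ℝ L] [FiniteDimensional ℝ L]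
    (A B Zc : Submodule ℝ L)
    (hdimL : Module.finrank ℝ L = 6)
    (hdimA : Module.finrank ℝ A = 2)
    (hdimB : Module.finrank ℝ B = 2)
    (hdimZ : Module.finrank ℝ Zc = 2)
    (hspan : A ⊔ B ⊔ Zc = ⊤)
    -- Zc is the center of 𝔤
    (hZc : ∀ z ∈ Zc, ∀ Y : L, ⁅z, Y⁆ = 0)
    (hZc' : ∀ z : L, (∀ Y : L, ⁅z, Y⁆ = 0) → z ∈ Zc)
    -- B ⊕ Z is abelian
    (habel : ∀ x ∈ B ⊔ Zc, ∀ y ∈ B ⊔ Zc, ⁅x, y⁆ = 0)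
    -- [A,A] ⊆ B ⊕ Z, [A,B] ⊆ Z
    (hAA : ∀ x ∈ A, ∀ y ∈ A, ⁅x, y⁆ ∈ B ⊔ Zc)
    (hAB : ∀ x ∈ A, ∀ y ∈ B, ⁅x, y⁆ ∈ Zc)
    -- ω is symplectic
    (ω : L →ₗ[ℝ] L →ₗ[ℝ] ℝ)
    (halt : ∀ X : L, ω X X = 0)
    (hclosed : ∀ X Y Z : L, ω ⁅X, Y⁆ Z - ω ⁅X, Z⁆ Y + ω ⁅Y, Z⁆ X = 0)
    (hnd : ∀ X : L, (∀ Y : L, ω X Y = 0) → X = 0)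
    -- A and Z are ω-isotropic and ω-dual, ω nondegenerate on B, B ⊥ (A ⊕ Z)
    (hAiso : ∀ x ∈ A, ∀ y ∈ A, ω x y = 0)
    (hZiso : ∀ x ∈ Zc, ∀ y ∈ Zc, ω x y = 0)
    (hdualAZ : ∀ x ∈ A, x ≠ 0 → ∃ z ∈ Zc, ω x z ≠ 0)
    (hdualZA : ∀ z ∈ Zc, z ≠ 0 → ∃ x ∈ A, ω x z ≠ 0)
    (hBnd : ∀ x ∈ B, x ≠ 0 → ∃ y ∈ B, ω x y ≠ 0)
    (hBorth : ∀ x ∈ B, ∀ y ∈ A ⊔ Zc, ω x y = 0)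
    -- J is a compatible complex structure preserving Z and B ⊕ Z
    (J : L →ₗ[ℝ] L)
    (hJ2 : ∀ X : L, J (J X) = -X)
    (hNij : ∀ X Y : L, ⁅J X, J Y⁆ - ⁅X, Y⁆ - J ⁅J X, Y⁆ - J ⁅X, J Y⁆ = 0)
    (hcompat : ∀ X Y : L, ω (J X) (J Y) = ω X Y)
    (hJZ : ∀ z ∈ Zc, J z ∈ Zc)
    (hJBZ : ∀ x ∈ B ⊔ Zc, J x ∈ B ⊔ Zc)
    -- associated metric and Levi-Civita connection
    (g : L → L → ℝ) (hg : ∀ X Y : L, g X Y = ω X (J Y))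
    (nabla : L → L → L)
    (hkoszul : ∀ X Y Z : L,
      2 * g (nabla X Y) Z = g ⁅X, Y⁆ Z + g ⁅Z, X⁆ Y + g X ⁅Z, Y⁆) :
    ∀ X ∈ A, ∀ Y ∈ Zc, nabla X Y = 0 ∧ nabla Y X = 0 :=
  type246_nabla_A_Z_zero_general A Zc hZc ω halt hclosed hnd J hJ2 hcompat hJZ g hg nabla hkoszul
end

section
/- Under the hypotheses of the type-(2,4,6) theorem, the curvature tensor R of the associated metric g = ω∘J satisfies R(X,Y)Z ∈ Z (the center) for all X, Y, Z ∈ 𝔤, and consequently the scalar square g(R,R) of the curvature tensor is zero and the Ricci tensor vanishes. -/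
/-!
Write `V = B ⊕ Z`. The bracket hypotheses make `𝔤 ⊇ V ⊇ Z ⊇ 0` a central series with `V`
abelian, and the symplectic hypotheses make `V` and `Z` each other's ω-orthogonal; as `J`
preserves both, they are also each other's left `g`-orthogonal. The Koszul formula then gives
`∇_Z = 0`, `∇_X Y ∈ V` and `∇_X V, ∇_V Y ⊆ Z`, so each term of `R(X,Y)W` lies in `Z`, while
`R(z,X)Y = 0` for `z ∈ Z`. Hence `g(R,R) = 0` because `Z` is isotropic, and `W ↦ R(W,X)Y`
squares to zero, so its trace `Ric(X,Y)` vanishes.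
-/

open LinearMap (BilinForm)

namespace LinearMap

theorem trace_eq_sum_repr {R M ι : Type*} [CommRing R] [AddCommGroup M] [Module R M]
    [Fintype ι] [DecidableEq ι] (b : Module.Basis ι R M) (f : M →ₗ[R] M) :
    trace R M f = ∑ i, b.repr (f (b i)) i := by
  simp only [trace_eq_matrix_trace R b, Matrix.trace, Matrix.diag_apply, toMatrix_apply]

theorem trace_eq_zero_of_comp_self_eq_zero {K M : Type*} [CommRing K] [IsReduced K]
    [AddCommGroup M] [Module K M] {f : M →ₗ[K] M} (hf : f ∘ₗ f = 0) : trace K M f = 0 :=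
  (isNilpotent_trace_of_isNilpotent ⟨2, by rwa [sq, Module.End.mul_eq_comp]⟩).eq_zero

theorem SeparatingLeft.eq_of_forall_two_mul_eq {K M : Type*} [Field K] [CharZero K]
    [AddCommGroup M] [Module K M] {g : BilinForm K M} (hg : g.SeparatingLeft) {u v : M}
    (h : ∀ w, 2 * g u w = 2 * g v w) : u = v :=
  sub_eq_zero.mp <| hg _ fun w => by
    rw [map_sub, sub_apply, sub_eq_zero]
    exact mul_left_cancel₀ two_ne_zero (h w)

theorem SeparatingLeft.compl₂ {R M : Type*} [CommRing R] [AddCommGroup M] [Module R M]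
    {ω : BilinForm R M} (hω : ω.SeparatingLeft) {J : M →ₗ[R] M} (hJ2 : ∀ x, J (J x) = -x) :
    (ω.compl₂ J).SeparatingLeft :=
  fun x hx => hω x fun y => by simpa [hJ2] using hx (-J y)

end LinearMap

namespace LinearMap.BilinForm

variable {R M : Type*} [CommRing R] [AddCommGroup M] [Module R M]

theorem mem_flip_orthogonal_iff {g : BilinForm R M} {S : Submodule R M} {x : M} :
    x ∈ orthogonal g.flip S ↔ ∀ s ∈ S, g x s = 0 :=
  Iff.rfl

theorem apply_eq_zero_of_flip_orthogonal_eq {g : BilinForm R M} {S T : Submodule R M}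
    (hST : orthogonal g.flip S = T) {x s : M} (hx : x ∈ T) (hs : s ∈ S) : g x s = 0 := by
  subst hST
  exact hx s hs

theorem flip_orthogonal_compl₂ (ω : BilinForm R M) {J : M →ₗ[R] M} (hJ2 : ∀ x, J (J x) = -x)
    {S : Submodule R M} (hJS : ∀ s ∈ S, J s ∈ S) :
    orthogonal (ω.compl₂ J).flip S = orthogonal ω.flip S := by
  ext x
  simp only [mem_flip_orthogonal_iff]
  refine ⟨fun h s hs => ?_, fun h s hs => h _ (hJS s hs)⟩
  simpa [hJ2] using h _ (S.neg_mem (hJS s hs))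

variable {ω : BilinForm R M} {A B Z : Submodule R M}

theorem flip_orthogonal_eq_sup_of_isotropic (hspan : A ⊔ (B ⊔ Z) = ⊤)
    (hZiso : ∀ x ∈ Z, ∀ y ∈ Z, ω x y = 0) (hdualAZ : ∀ x ∈ A, x ≠ 0 → ∃ z ∈ Z, ω x z ≠ 0)
    (hBorth : ∀ x ∈ B, ∀ y ∈ A ⊔ Z, ω x y = 0) :
    orthogonal ω.flip Z = B ⊔ Z := by
  have hVorth (u : M) (hu : u ∈ B ⊔ Z) (z : M) (hz : z ∈ Z) : ω u z = 0 := by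
    obtain ⟨b, hb, z', hz', rfl⟩ := Submodule.mem_sup.mp hu
    rw [map_add, LinearMap.add_apply, hBorth b hb z (Submodule.mem_sup_right hz),
      hZiso z' hz' z hz, add_zero]
  ext x
  refine ⟨fun hx => ?_, fun hx z hz => hVorth x hx z hz⟩
  obtain ⟨a, ha, u, hu, rfl⟩ :=
    Submodule.mem_sup.mp (hspan ▸ Submodule.mem_top : x ∈ A ⊔ (B ⊔ Z))
  obtain rfl : a = 0 := by
    by_contra hne
    obtain ⟨z, hz, haz⟩ := hdualAZ a ha hne
    have := mem_flip_orthogonal_iff.mp hx z hz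
    rw [map_add, LinearMap.add_apply, hVorth u hu z hz, add_zero] at this
    exact haz this
  simpa using hu

theorem flip_orthogonal_sup_eq_of_isotropic (hω : ω.IsAlt) (hspan : A ⊔ (B ⊔ Z) = ⊤)
    (hZiso : ∀ x ∈ Z, ∀ y ∈ Z, ω x y = 0) (hdualAZ : ∀ x ∈ A, x ≠ 0 → ∃ z ∈ Z, ω x z ≠ 0)
    (hBnd : ∀ x ∈ B, x ≠ 0 → ∃ y ∈ B, ω x y ≠ 0) (hBorth : ∀ x ∈ B, ∀ y ∈ A ⊔ Z, ω x y = 0) :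
    orthogonal ω.flip (B ⊔ Z) = Z := by
  have hZorth (z : M) (hz : z ∈ Z) (u : M) (hu : u ∈ B ⊔ Z) : ω z u = 0 := by
    obtain ⟨b, hb, z', hz', rfl⟩ := Submodule.mem_sup.mp hu
    rw [map_add, hω.eq_iff.mpr (hBorth b hb z (Submodule.mem_sup_right hz)), hZiso z hz z' hz',
      add_zero]
  ext x
  refine ⟨fun hx => ?_, fun hx u hu => hZorth x hx u hu⟩
  have hxV : x ∈ B ⊔ Z := by
    rw [← flip_orthogonal_eq_sup_of_isotropic hspan hZiso hdualAZ hBorth]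
    exact fun z hz => hx z (Submodule.mem_sup_right hz)
  obtain ⟨b, hb, z, hz, rfl⟩ := Submodule.mem_sup.mp hxV
  obtain rfl : b = 0 := by
    by_contra hne
    obtain ⟨y, hy, hby⟩ := hBnd b hb hne
    have := mem_flip_orthogonal_iff.mp hx y (Submodule.mem_sup_left hy)
    rw [map_add, LinearMap.add_apply, hZorth z hz y (Submodule.mem_sup_left hy), add_zero] at this
    exact hby this
  simpa using hz

end LinearMap.BilinForm

open LinearMap.BilinForm

section CentralSeries

variable {K L : Type*} [CommRing K] [LieRing L] [LieAlgebra K L]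

structure IsAbelianCentralSeries (Z V : Submodule K L) : Prop where
  lie_mem : ∀ X Y : L, ⁅X, Y⁆ ∈ V
  lie_mem_of_mem_right : ∀ X : L, ∀ v ∈ V, ⁅X, v⁆ ∈ Z
  lie_eq_zero_of_mem : ∀ z ∈ Z, ∀ Y : L, ⁅z, Y⁆ = 0
  lie_eq_zero_of_mem_of_mem : ∀ v ∈ V, ∀ w ∈ V, ⁅v, w⁆ = 0

theorem IsAbelianCentralSeries.lie_mem_of_mem_left {Z V : Submodule K L}
    (hS : IsAbelianCentralSeries Z V) {v : L} (hv : v ∈ V) (X : L) : ⁅v, X⁆ ∈ Z := by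
  rw [← lie_skew]
  exact Z.neg_mem (hS.lie_mem_of_mem_right X v hv)

theorem isAbelianCentralSeries_of_sup_eq_top {A B Z : Submodule K L} (hspan : A ⊔ (B ⊔ Z) = ⊤)
    (hZ : ∀ z ∈ Z, ∀ Y : L, ⁅z, Y⁆ = 0) (habel : ∀ x ∈ B ⊔ Z, ∀ y ∈ B ⊔ Z, ⁅x, y⁆ = 0)
    (hAA : ∀ x ∈ A, ∀ y ∈ A, ⁅x, y⁆ ∈ B ⊔ Z) (hAB : ∀ x ∈ A, ∀ y ∈ B, ⁅x, y⁆ ∈ Z) :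
    IsAbelianCentralSeries Z (B ⊔ Z) := by
  have hdecomp (X : L) : ∃ a ∈ A, ∃ u ∈ B ⊔ Z, a + u = X :=
    Submodule.mem_sup.mp (hspan ▸ Submodule.mem_top)
  have hLV (X : L) (v : L) (hv : v ∈ B ⊔ Z) : ⁅X, v⁆ ∈ Z := by
    obtain ⟨a, ha, u, hu, rfl⟩ := hdecomp X
    obtain ⟨b, hb, z, hz, rfl⟩ := Submodule.mem_sup.mp hv
    have hza : ⁅a, z⁆ = 0 := by rw [← lie_skew, hZ z hz, neg_zero]
    rw [add_lie, habel u hu _ hv, lie_add, hza, add_zero, add_zero]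
    exact hAB a ha b hb
  refine ⟨fun X Y => ?_, hLV, hZ, habel⟩
  obtain ⟨a, ha, u, hu, rfl⟩ := hdecomp X
  obtain ⟨a', ha', u', hu', rfl⟩ := hdecomp Y
  have hZle : Z ≤ B ⊔ Z := le_sup_right
  rw [add_lie, lie_add, lie_add, ← lie_skew u a']
  exact add_mem (add_mem (hAA a ha a' ha') (hZle (hLV a u' hu')))
    (add_mem (neg_mem (hZle (hLV a' u hu))) (hZle (hLV u u' hu')))

end CentralSeries

section Koszul

variable {K L : Type*} [Field K] [CharZero K] [LieRing L] [LieAlgebra K L]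

-- The Koszul formula for left-invariant vector fields, whose inner products are constant.
def IsKoszulConnection (g : BilinForm K L) (nabla : L → L → L) : Prop :=
  ∀ X Y W : L, 2 * g (nabla X Y) W = g ⁅X, Y⁆ W + g ⁅W, X⁆ Y + g X ⁅W, Y⁆

def curvature (nabla : L → L → L) (X Y W : L) : L :=
  nabla X (nabla Y W) - nabla Y (nabla X W) - nabla ⁅X, Y⁆ W

namespace IsKoszulConnection

variable {g : BilinForm K L} {nabla : L → L → L} (h : IsKoszulConnection g nabla)
  (hg : g.SeparatingLeft)

include h hg in
theorem add_left (X X' Y : L) : nabla (X + X') Y = nabla X Y + nabla X' Y :=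
  hg.eq_of_forall_two_mul_eq fun W => by
    rw [map_add, LinearMap.add_apply, mul_add, h, h, h]
    simp only [add_lie, lie_add, map_add, LinearMap.add_apply]
    ring

include h hg in
theorem smul_left (c : K) (X Y : L) : nabla (c • X) Y = c • nabla X Y :=
  hg.eq_of_forall_two_mul_eq fun W => by
    rw [map_smul, LinearMap.smul_apply, smul_eq_mul, mul_left_comm, h, h]
    simp only [smul_lie, lie_smul, map_smul, LinearMap.smul_apply, smul_eq_mul]
    ring

include h hg in
theorem add_right (X Y Y' : L) : nabla X (Y + Y') = nabla X Y + nabla X Y' :=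
  hg.eq_of_forall_two_mul_eq fun W => by
    rw [map_add, LinearMap.add_apply, mul_add, h, h, h]
    simp only [lie_add, map_add, LinearMap.add_apply]
    ring

include h hg in
theorem smul_right (c : K) (X Y : L) : nabla X (c • Y) = c • nabla X Y :=
  hg.eq_of_forall_two_mul_eq fun W => by
    rw [map_smul, LinearMap.smul_apply, smul_eq_mul, mul_left_comm, h, h]
    simp only [lie_smul, map_smul, LinearMap.smul_apply, smul_eq_mul]
    ring

include h hg in
theorem zero_right (X : L) : nabla X 0 = 0 := by
  simpa using h.smul_right hg 0 X 0

include h hg in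
def curvatureLeft (X Y : L) : L →ₗ[K] L where
  toFun W := curvature nabla W X Y
  map_add' W W' := by
    simp only [curvature, add_lie, h.add_left hg, h.add_right hg]
    abel
  map_smul' c W := by
    simp only [curvature, smul_lie, h.smul_left hg, h.smul_right hg, RingHom.id_apply, smul_sub]

variable {Z V : Submodule K L} (hS : IsAbelianCentralSeries Z V) (hZV : orthogonal g.flip Z = V)
  (hVZ : orthogonal g.flip V = Z)

include h hg hS hVZ in
theorem nabla_eq_zero_of_mem {z : L} (hz : z ∈ Z) (Y : L) : nabla z Y = 0 :=
  hg.eq_of_forall_two_mul_eq fun W => by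
    have hWz : ⁅W, z⁆ = 0 := by rw [← lie_skew, hS.lie_eq_zero_of_mem z hz, neg_zero]
    have hzY : g z ⁅W, Y⁆ = 0 := apply_eq_zero_of_flip_orthogonal_eq hVZ hz (hS.lie_mem W Y)
    rw [h, hS.lie_eq_zero_of_mem z hz, hWz, hzY]
    simp

include h hS hZV in
theorem nabla_mem (X Y : L) : nabla X Y ∈ V := by
  rw [← hZV, mem_flip_orthogonal_iff]
  intro z hz
  have hXY : g ⁅X, Y⁆ z = 0 := apply_eq_zero_of_flip_orthogonal_eq hZV (hS.lie_mem X Y) hz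
  have h2 := h X Y z
  rw [hXY, hS.lie_eq_zero_of_mem z hz, hS.lie_eq_zero_of_mem z hz] at h2
  simpa using h2

include h hS hVZ in
theorem nabla_mem_of_mem_right (X : L) {v : L} (hv : v ∈ V) : nabla X v ∈ Z := by
  rw [← hVZ, mem_flip_orthogonal_iff]
  intro w hw
  have h1 : g ⁅X, v⁆ w = 0 :=
    apply_eq_zero_of_flip_orthogonal_eq hVZ (hS.lie_mem_of_mem_right X v hv) hw
  have h2 : g ⁅w, X⁆ v = 0 :=
    apply_eq_zero_of_flip_orthogonal_eq hVZ (hS.lie_mem_of_mem_left hw X) hv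
  have h3 := h X v w
  rw [h1, h2, hS.lie_eq_zero_of_mem_of_mem w hw v hv] at h3
  simpa using h3

include h hS hZV hVZ in
theorem nabla_mem_of_mem_left {v : L} (hv : v ∈ V) (Y : L) : nabla v Y ∈ Z := by
  rw [← hVZ, mem_flip_orthogonal_iff]
  intro w hw
  have h1 : g ⁅v, Y⁆ w = 0 :=
    apply_eq_zero_of_flip_orthogonal_eq hVZ (hS.lie_mem_of_mem_left hv Y) hw
  have h2 : g v ⁅w, Y⁆ = 0 :=
    apply_eq_zero_of_flip_orthogonal_eq hZV hv (hS.lie_mem_of_mem_left hw Y)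
  have h3 := h v Y w
  rw [h1, h2, hS.lie_eq_zero_of_mem_of_mem w hw v hv] at h3
  simpa using h3

include h hS hZV hVZ in
theorem curvature_mem (X Y W : L) : curvature nabla X Y W ∈ Z :=
  Z.sub_mem (Z.sub_mem (h.nabla_mem_of_mem_right hS hVZ X (h.nabla_mem hS hZV Y W))
    (h.nabla_mem_of_mem_right hS hVZ Y (h.nabla_mem hS hZV X W)))
    (h.nabla_mem_of_mem_left hS hZV hVZ (hS.lie_mem X Y) W)

include h hg hS hVZ in
theorem curvature_eq_zero_of_mem {z : L} (hz : z ∈ Z) (X Y : L) :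
    curvature nabla z X Y = 0 := by
  simp only [curvature, h.nabla_eq_zero_of_mem hg hS hVZ hz, h.zero_right hg,
    hS.lie_eq_zero_of_mem z hz, h.nabla_eq_zero_of_mem hg hS hVZ Z.zero_mem, sub_zero]

include hS hZV hVZ in
theorem trace_curvatureLeft_eq_zero (X Y : L) :
    LinearMap.trace K L (h.curvatureLeft hg X Y) = 0 :=
  LinearMap.trace_eq_zero_of_comp_self_eq_zero <| LinearMap.ext fun W =>
    h.curvature_eq_zero_of_mem hg hS hVZ (h.curvature_mem hS hZV hVZ W X Y) X Y

end IsKoszulConnection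

end Koszul

theorem type246_curvature_central_null_ricci_flat_general
    {L : Type*} [LieRing L] [LieAlgebra ℝ L]
    (A B Zc : Submodule ℝ L)
    (hspan : A ⊔ B ⊔ Zc = ⊤)
    -- Zc is the center of 𝔤
    (hZc : ∀ z ∈ Zc, ∀ Y : L, ⁅z, Y⁆ = 0)
    -- B ⊕ Z is abelian
    (habel : ∀ x ∈ B ⊔ Zc, ∀ y ∈ B ⊔ Zc, ⁅x, y⁆ = 0)
    -- [A,A] ⊆ B ⊕ Z, [A,B] ⊆ Z
    (hAA : ∀ x ∈ A, ∀ y ∈ A, ⁅x, y⁆ ∈ B ⊔ Zc)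
    (hAB : ∀ x ∈ A, ∀ y ∈ B, ⁅x, y⁆ ∈ Zc)
    -- ω is symplectic
    (ω : L →ₗ[ℝ] L →ₗ[ℝ] ℝ)
    (halt : ∀ X : L, ω X X = 0)
    (hnd : ∀ X : L, (∀ Y : L, ω X Y = 0) → X = 0)
    -- A and Z are ω-isotropic and ω-dual, ω nondegenerate on B, B ⊥ (A ⊕ Z)
    (hZiso : ∀ x ∈ Zc, ∀ y ∈ Zc, ω x y = 0)
    (hdualAZ : ∀ x ∈ A, x ≠ 0 → ∃ z ∈ Zc, ω x z ≠ 0)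
    (hBnd : ∀ x ∈ B, x ≠ 0 → ∃ y ∈ B, ω x y ≠ 0)
    (hBorth : ∀ x ∈ B, ∀ y ∈ A ⊔ Zc, ω x y = 0)
    -- J is a compatible complex structure preserving Z and B ⊕ Z
    (J : L →ₗ[ℝ] L)
    (hJ2 : ∀ X : L, J (J X) = -X)
    (hJZ : ∀ z ∈ Zc, J z ∈ Zc)
    (hJBZ : ∀ x ∈ B ⊔ Zc, J x ∈ B ⊔ Zc)
    -- associated metric and Levi-Civita connection
    (g : L → L → ℝ) (hg : ∀ X Y : L, g X Y = ω X (J Y))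
    (nabla : L → L → L)
    (hkoszul : ∀ X Y Z : L,
      2 * g (nabla X Y) Z = g ⁅X, Y⁆ Z + g ⁅Z, X⁆ Y + g X ⁅Z, Y⁆)
    -- curvature tensor and a basis (for computing the Ricci trace)
    (R : L → L → L → L)
    (hR : ∀ X Y W : L,
      R X Y W = nabla X (nabla Y W) - nabla Y (nabla X W) - nabla ⁅X, Y⁆ W)
    (b : Module.Basis (Fin 6) ℝ L) :
    (∀ X Y W : L, R X Y W ∈ Zc) ∧
    (∀ X Y W X' Y' W' : L, g (R X Y W) (R X' Y' W') = 0) ∧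
    (∀ X Y : L, (∑ i : Fin 6, b.repr (R (b i) X Y) i) = 0) := by
  rw [sup_assoc] at hspan
  have hS := isAbelianCentralSeries_of_sup_eq_top hspan hZc habel hAA hAB
  have hsep : (ω.compl₂ J).SeparatingLeft := LinearMap.SeparatingLeft.compl₂ hnd hJ2
  have hZV : orthogonal (ω.compl₂ J).flip Zc = B ⊔ Zc := by
    rw [flip_orthogonal_compl₂ ω hJ2 hJZ]
    exact flip_orthogonal_eq_sup_of_isotropic hspan hZiso hdualAZ hBorth
  have hVZ : orthogonal (ω.compl₂ J).flip (B ⊔ Zc) = Zc := by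
    rw [flip_orthogonal_compl₂ ω hJ2 hJBZ]
    exact flip_orthogonal_sup_eq_of_isotropic halt hspan hZiso hdualAZ hBnd hBorth
  have hK : IsKoszulConnection (ω.compl₂ J) nabla := fun X Y W => by
    simpa only [hg, LinearMap.compl₂_apply] using hkoszul X Y W
  obtain rfl : R = curvature nabla := funext fun X => funext fun Y => funext (hR X Y)
  have hRZ := hK.curvature_mem hS hZV hVZ
  refine ⟨hRZ, fun X Y W X' Y' W' => ?_, fun X Y => ?_⟩
  · rw [hg]
    exact hZiso _ (hRZ X Y W) _ (hJZ _ (hRZ X' Y' W'))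
  · rw [← hK.trace_curvatureLeft_eq_zero hsep hS hZV hVZ X Y, LinearMap.trace_eq_sum_repr b]
    rfl

/-- type-(2,4,6) theorem: the curvature takes values in the center Z,
the scalar square g(R,R) vanishes, and the Ricci tensor vanishes. -/
theorem type246_curvature_central_null_ricci_flat
    {L : Type*} [LieRing L] [LieAlgebra ℝ L] [FiniteDimensional ℝ L]
    (A B Zc : Submodule ℝ L)
    (hdimL : Module.finrank ℝ L = 6)
    (hdimA : Module.finrank ℝ A = 2)
    (hdimB : Module.finrank ℝ B = 2)
    (hdimZ : Module.finrank ℝ Zc = 2)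
    (hspan : A ⊔ B ⊔ Zc = ⊤)
    -- Zc is the center of 𝔤
    (hZc : ∀ z ∈ Zc, ∀ Y : L, ⁅z, Y⁆ = 0)
    (hZc' : ∀ z : L, (∀ Y : L, ⁅z, Y⁆ = 0) → z ∈ Zc)
    -- B ⊕ Z is abelian
    (habel : ∀ x ∈ B ⊔ Zc, ∀ y ∈ B ⊔ Zc, ⁅x, y⁆ = 0)
    -- [A,A] ⊆ B ⊕ Z, [A,B] ⊆ Z
    (hAA : ∀ x ∈ A, ∀ y ∈ A, ⁅x, y⁆ ∈ B ⊔ Zc)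
    (hAB : ∀ x ∈ A, ∀ y ∈ B, ⁅x, y⁆ ∈ Zc)
    -- ω is symplectic
    (ω : L →ₗ[ℝ] L →ₗ[ℝ] ℝ)
    (halt : ∀ X : L, ω X X = 0)
    (hclosed : ∀ X Y Z : L, ω ⁅X, Y⁆ Z - ω ⁅X, Z⁆ Y + ω ⁅Y, Z⁆ X = 0)
    (hnd : ∀ X : L, (∀ Y : L, ω X Y = 0) → X = 0)
    -- A and Z are ω-isotropic and ω-dual, ω nondegenerate on B, B ⊥ (A ⊕ Z)
    (hAiso : ∀ x ∈ A, ∀ y ∈ A, ω x y = 0)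
    (hZiso : ∀ x ∈ Zc, ∀ y ∈ Zc, ω x y = 0)
    (hdualAZ : ∀ x ∈ A, x ≠ 0 → ∃ z ∈ Zc, ω x z ≠ 0)
    (hdualZA : ∀ z ∈ Zc, z ≠ 0 → ∃ x ∈ A, ω x z ≠ 0)
    (hBnd : ∀ x ∈ B, x ≠ 0 → ∃ y ∈ B, ω x y ≠ 0)
    (hBorth : ∀ x ∈ B, ∀ y ∈ A ⊔ Zc, ω x y = 0)
    -- J is a compatible complex structure preserving Z and B ⊕ Z
    (J : L →ₗ[ℝ] L)
    (hJ2 : ∀ X : L, J (J X) = -X)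
    (hNij : ∀ X Y : L, ⁅J X, J Y⁆ - ⁅X, Y⁆ - J ⁅J X, Y⁆ - J ⁅X, J Y⁆ = 0)
    (hcompat : ∀ X Y : L, ω (J X) (J Y) = ω X Y)
    (hJZ : ∀ z ∈ Zc, J z ∈ Zc)
    (hJBZ : ∀ x ∈ B ⊔ Zc, J x ∈ B ⊔ Zc)
    -- associated metric and Levi-Civita connection
    (g : L → L → ℝ) (hg : ∀ X Y : L, g X Y = ω X (J Y))
    (nabla : L → L → L)
    (hkoszul : ∀ X Y Z : L,
      2 * g (nabla X Y) Z = g ⁅X, Y⁆ Z + g ⁅Z, X⁆ Y + g X ⁅Z, Y⁆)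
    -- curvature tensor and a basis (for computing the Ricci trace)
    (R : L → L → L → L)
    (hR : ∀ X Y W : L,
      R X Y W = nabla X (nabla Y W) - nabla Y (nabla X W) - nabla ⁅X, Y⁆ W)
    (b : Module.Basis (Fin 6) ℝ L) :
    (∀ X Y W : L, R X Y W ∈ Zc) ∧
    (∀ X Y W X' Y' W' : L, g (R X Y W) (R X' Y' W') = 0) ∧
    (∀ X Y : L, (∑ i : Fin 6, b.repr (R (b i) X Y) i) = 0) :=
  type246_curvature_central_null_ricci_flat_general A B Zc hspan hZc habel hAA hAB ω halt hnd hZiso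
    hdualAZ hBnd hBorth J hJ2 hJZ hJBZ g hg nabla hkoszul R hR b
end
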